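/- The matrix A(n) = n¹A¹ + n²A², with A¹, A² as in the 2D scalar relaxation system with parameters c = (c¹,c²), d = (d¹,d²), has real eigenvalues λ² = ½(c·n + d·n) and λ^{1,3} = ½(c·n + d·n) ∓ ½√((n¹d¹ − n¹c¹)² + (n²d² − n²c²)²); in particular the characteristic polynomial of A(n) factors as (λ − λ¹)(λ − λ²)(λ − λ³) with all roots real. -/

import Mathlib

/-!
A 3 × 3 characteristic polynomial is determined by the trace, the sum of the principal 2 × 2
minors and the determinant, and the product `(X - (m - t)) (X - m) (X - (m + t))` depends on `t`
only through `t²`. For `A(n)` the trace is `3m` with `m = ½(c·n + d·n)`, and the other two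
invariants are `3m² - t²` and `m³ - m t²` with `4t² = (n¹d¹ - n¹c¹)² + (n²d² - n²c²)²`, which is
`r²` for the square root `r` of the statement.
-/

open Polynomial

namespace Matrix

variable {R : Type*} [CommRing R]

def principalMinorSum (M : Matrix (Fin 3) (Fin 3) R) : R :=
  M 0 0 * M 1 1 - M 0 1 * M 1 0 + M 0 0 * M 2 2 - M 0 2 * M 2 0 + M 1 1 * M 2 2 - M 1 2 * M 2 1

theorem charpoly_fin_three (M : Matrix (Fin 3) (Fin 3) R) :
    M.charpoly = X ^ 3 - C M.trace * X ^ 2 + C M.principalMinorSum * X - C M.det := by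
  simp only [charpoly, det_fin_three, charmatrix_apply, trace_fin_three, principalMinorSum]
  simp only [Fin.reduceEq, diagonal_apply_eq, diagonal_apply_ne, ne_eq,
    not_false_eq_true, map_sub, map_add, map_mul]
  ring

end Matrix

theorem Polynomial.X_sub_C_mul_X_sub_C_mul_X_sub_C_symm {R : Type*} [CommRing R] (m t : R) :
    (X - C (m - t)) * (X - C m) * (X - C (m + t))
      = X ^ 3 - C (3 * m) * X ^ 2 + C (3 * m ^ 2 - t ^ 2) * X - C (m ^ 3 - m * t ^ 2) := by
  simp only [map_sub, map_add, map_mul, map_pow, map_ofNat]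
  ring

theorem relax_charpoly (c d n : ℝ × ℝ) :
    let A1 : Matrix (Fin 3) (Fin 3) ℝ :=
      !![0, 1, 0;
         -(c.1 * d.1), c.1 + d.1, 0;
         -(c.2 * d.1) - (1/4) * (c.1 - d.1) * (c.2 - d.2), (1/2) * (c.2 + d.2), (1/2) * (c.1 + d.1)]
    let A2 : Matrix (Fin 3) (Fin 3) ℝ :=
      !![0, 0, 1;
         -(c.1 * d.2) - (1/4) * (c.1 - d.1) * (c.2 - d.2), (1/2) * (c.2 + d.2), (1/2) * (c.1 + d.1);
         -(c.2 * d.2), 0, c.2 + d.2]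
    let cn := c.1 * n.1 + c.2 * n.2
    let dn := d.1 * n.1 + d.2 * n.2
    let r := Real.sqrt ((n.1 * d.1 - n.1 * c.1) ^ 2 + (n.2 * d.2 - n.2 * c.2) ^ 2)
    Matrix.charpoly (n.1 • A1 + n.2 • A2)
      = (Polynomial.X - Polynomial.C ((1/2) * (cn + dn) - (1/2) * r)) *
        (Polynomial.X - Polynomial.C ((1/2) * (cn + dn))) *
        (Polynomial.X - Polynomial.C ((1/2) * (cn + dn) + (1/2) * r)) := by
  intro A1 A2 cn dn r
  have hr : r ^ 2 = (n.1 * d.1 - n.1 * c.1) ^ 2 + (n.2 * d.2 - n.2 * c.2) ^ 2 :=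
    Real.sq_sqrt (by positivity)
  set A := n.1 • A1 + n.2 • A2
  have htrace : A.trace = 3 * ((1/2) * (cn + dn)) := by
    rw [Matrix.trace_fin_three]
    simp only [A, A1, A2, cn, dn, Matrix.add_apply, Matrix.smul_apply, Matrix.of_apply,
      Matrix.cons_val, smul_eq_mul]
    ring
  have hminors : A.principalMinorSum = 3 * ((1/2) * (cn + dn)) ^ 2 - ((1/2) * r) ^ 2 := by
    rw [Matrix.principalMinorSum]
    simp only [A, A1, A2, cn, dn, Matrix.add_apply, Matrix.smul_apply, Matrix.of_apply,
      Matrix.cons_val, smul_eq_mul]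
    linear_combination (1/4) * hr
  have hdet : A.det = ((1/2) * (cn + dn)) ^ 3 - (1/2) * (cn + dn) * ((1/2) * r) ^ 2 := by
    rw [Matrix.det_fin_three]
    simp only [A, A1, A2, cn, dn, Matrix.add_apply, Matrix.smul_apply, Matrix.of_apply,
      Matrix.cons_val, smul_eq_mul]
    linear_combination ((cn + dn) / 8) * hr
  rw [Polynomial.X_sub_C_mul_X_sub_C_mul_X_sub_C_symm, Matrix.charpoly_fin_three, htrace, hminors, hdet]
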